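/- arXiv:2311.11320 — 2 statements merged into one kernel-verified Lean document; each statement's English description precedes it below -/
import Mathlib

section
/- In the setting of the product graph Dirac operator 𝒟(G) with d cycle-digraph factors and (D-d) directed-path factors: if at least one directed-path factor has an even number of vertices then ker 𝒟(G) = 0; if all directed-path factors have odd vertex counts then dim ker 𝒟(G) ≥ rank(γ). -/
/-!
Write `𝒟 = ∑ μ, S μ * G μ` with `S μ = (A_as)_μ ⊗ 1` and `G μ = 1 ⊗ γ μ`. The `S μ` commute with
each other and with every `G ν`, and the `G μ` satisfy the Clifford relations, so the cross terms
of `𝒟²` cancel in pairs and `𝒟² = ∑ μ, (S μ)²`. Each `S μ` is skew-Hermitian, hence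
`⟪v, 𝒟² v⟫ = -∑ μ, ‖S μ v‖²` and every `v ∈ ker 𝒟` is killed by every `S μ`. A kernel vector of an
even path satisfies `g (i + 1) = g (i - 1)` with zero boundary values at `-1` and `N`, which have
the same parity, so it vanishes; then `ker 𝒟 = 0`. Conversely, if every factor has a kernel vector
`w μ` (constant on a cycle, the indicator of the even vertices on an odd path), then
`(⨂ μ, w μ) ⊗ u ∈ ker 𝒟` for every spinor `u`, so `dim ker 𝒟 ≥ rank γ`.
-/

/-- Anti-symmetrized adjacency matrix of the cycle digraph on `N` vertices. -/
def cycleAsAdj (N : ℕ) : Matrix (Fin N) (Fin N) ℂ :=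
  fun j k => if (k : ℕ) = ((j : ℕ) + 1) % N then 1
    else if (j : ℕ) = ((k : ℕ) + 1) % N then -1 else 0

/-- Anti-symmetrized adjacency matrix of the simple directed path on `N` vertices. -/
def pathAsAdj (N : ℕ) : Matrix (Fin N) (Fin N) ℂ :=
  fun j k => if (k : ℕ) = (j : ℕ) + 1 then 1
    else if (j : ℕ) = (k : ℕ) + 1 then -1 else 0

open Matrix Finset Function Kronecker
open scoped ComplexOrder

theorem sum_sum_eq_sum_diag_of_antisymm {M ι : Type*} [AddCommMonoid M] [Fintype ι]
    [DecidableEq ι] (f : ι → ι → M) (hf : ∀ μ ν, μ ≠ ν → f μ ν + f ν μ = 0) :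
    ∑ μ, ∑ ν, f μ ν = ∑ μ, f μ μ := by
  have hoff : ∑ p : ι × ι, (if p.1 = p.2 then 0 else f p.1 p.2) = 0 := by
    refine sum_ninvolution Prod.swap (fun p => ?_) (fun p hp => ?_) (fun _ => mem_univ _)
      Prod.swap_swap
    · by_cases h : p.1 = p.2
      · simp [h]
      · simp [h, Ne.symm h, hf _ _ h]
    · intro hswap
      exact hp (if_pos (congrArg Prod.fst hswap).symm)
  calc ∑ μ, ∑ ν, f μ ν
      = ∑ μ, ∑ ν, ((if μ = ν then f μ ν else 0) + if μ = ν then 0 else f μ ν) := by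
        simp only [ite_add_ite, add_zero, zero_add, ite_self]
    _ = ∑ μ, f μ μ + ∑ p : ι × ι, if p.1 = p.2 then 0 else f p.1 p.2 := by
        simp [sum_add_distrib, Fintype.sum_prod_type]
    _ = ∑ μ, f μ μ := by rw [hoff, add_zero]

theorem sum_mul_sum_eq_sum_mul_self_of_anticommute {R ι : Type*} [Semiring R] [Fintype ι]
    [DecidableEq ι] {S G : ι → R} (hS : ∀ μ ν, Commute (S μ) (S ν))
    (hSG : ∀ μ ν, Commute (S μ) (G ν)) (hG : ∀ μ, G μ * G μ = 1)
    (hGanti : ∀ μ ν, μ ≠ ν → G μ * G ν + G ν * G μ = 0) :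
    (∑ μ, S μ * G μ) * (∑ μ, S μ * G μ) = ∑ μ, S μ * S μ := by
  have hreorder : ∀ μ ν, S μ * G μ * (S ν * G ν) = S μ * S ν * (G μ * G ν) := fun μ ν => by
    rw [mul_assoc, ← mul_assoc (G μ), ← (hSG ν μ).eq, mul_assoc, mul_assoc]
  rw [sum_mul_sum]
  simp only [hreorder]
  rw [sum_sum_eq_sum_diag_of_antisymm]
  · simp [hG]
  · intro μ ν h
    rw [(hS ν μ).eq, ← mul_add, hGanti μ ν h, mul_zero]

theorem mulVec_eq_zero_of_sum_mul_self_mulVec_eq_zero {ι m R : Type*} [Fintype ι] [Fintype m]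
    [DecidableEq m] [Ring R] [PartialOrder R] [StarRing R] [StarOrderedRing R] [NoZeroDivisors R]
    {S : ι → Matrix m m R} (hS : ∀ μ, (S μ)ᴴ = -S μ) {v : m → R}
    (hv : (∑ μ, S μ * S μ) *ᵥ v = 0) (μ : ι) : S μ *ᵥ v = 0 := by
  have hskew : ∀ μ, star v ⬝ᵥ (S μ * S μ) *ᵥ v = -(star (S μ *ᵥ v) ⬝ᵥ S μ *ᵥ v) := fun μ => by
    rw [← mulVec_mulVec, dotProduct_mulVec, star_mulVec, hS, vecMul_neg, neg_dotProduct, neg_neg]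
  have hsum : ∑ μ, star (S μ *ᵥ v) ⬝ᵥ S μ *ᵥ v = 0 := by
    have := congrArg (star v ⬝ᵥ ·) hv
    simpa [sum_mulVec, dotProduct_sum, hskew, sum_neg_distrib] using this
  rw [Fintype.sum_eq_zero_iff_of_nonneg fun μ => dotProduct_star_self_nonneg _] at hsum
  exact dotProduct_star_self_eq_zero.mp (congrFun hsum μ)

section Kronecker

variable {m k R : Type*} [Fintype m] [Fintype k] [CommRing R]

theorem kronecker_mulVec_apply (M : Matrix m m R) (N : Matrix k k R)
    (w : m → R) (u : k → R) (x : m × k) :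
    ((M ⊗ₖ N) *ᵥ fun y => w y.1 * u y.2) x = (M *ᵥ w) x.1 * (N *ᵥ u) x.2 := by
  simp only [mulVec_apply_eq_sum, Fintype.sum_prod_type, kroneckerMap_apply, sum_mul_sum]
  exact sum_congr rfl fun _ _ => sum_congr rfl fun _ _ => by ring

theorem kronecker_one_mulVec_apply [DecidableEq k] (M : Matrix m m R)
    (v : m × k → R) (x : m) (t : k) :
    ((M ⊗ₖ (1 : Matrix k k R)) *ᵥ v) (x, t) = (M *ᵥ fun y => v (y, t)) x := by
  simp [mulVec_apply_eq_sum, Fintype.sum_prod_type, one_apply]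

end Kronecker

section Slot

variable {ι : Type*} [Fintype ι] [DecidableEq ι] {n : ι → Type*} [∀ μ, DecidableEq (n μ)]
  {R : Type*} [CommRing R]

/-- `B` acting on tensor slot `μ` of `⨂ ν, R^(n ν)`; the paper's `(A_as)_μ` is
`slotMatrix μ (A μ) ⊗ₖ 1`. -/
def slotMatrix (μ : ι) (B : Matrix (n μ) (n μ) R) : Matrix (∀ ν, n ν) (∀ ν, n ν) R :=
  of fun p q => B (p μ) (q μ) * ∏ ν ∈ univ.erase μ, if p ν = q ν then 1 else 0

theorem slotMatrix_neg (μ : ι) (B : Matrix (n μ) (n μ) R) :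
    slotMatrix μ (-B) = -slotMatrix μ B := by
  ext p q
  simp [slotMatrix]

theorem slotMatrix_conjTranspose [StarRing R] (μ : ι) (B : Matrix (n μ) (n μ) R) :
    (slotMatrix μ B)ᴴ = slotMatrix μ Bᴴ := by
  ext p q
  simp [slotMatrix, eq_comm, apply_ite star]

variable [∀ μ, Fintype (n μ)]

theorem slotMatrix_mulVec_apply (μ : ι) (B : Matrix (n μ) (n μ) R) (v : (∀ ν, n ν) → R)
    (x : ∀ ν, n ν) : (slotMatrix μ B *ᵥ v) x = ∑ j, B (x μ) j * v (update x μ j) := by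
  have hsum : ∀ q : ∀ ν, n ν, (∏ ν ∈ univ.erase μ, if x ν = q ν then (1 : R) else 0) =
      ∑ j, if q = update x μ j then 1 else 0 := by
    intro q
    simp only [eq_update_iff, ite_and, sum_ite_eq, mem_univ, if_true, prod_boole, mem_erase]
    simp [eq_comm]
  simp only [mulVec, dotProduct, slotMatrix, of_apply, hsum, mul_sum, sum_mul]
  rw [sum_comm]
  simp [ite_mul, mul_ite]

theorem slotMatrix_commute {μ ν : ι} (h : μ ≠ ν) (B : Matrix (n μ) (n μ) R)
    (C : Matrix (n ν) (n ν) R) : Commute (slotMatrix μ B) (slotMatrix ν C) := by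
  refine ext_of_mulVec_single fun q => funext fun x => ?_
  simp only [← mulVec_mulVec, slotMatrix_mulVec_apply, update_of_ne h, update_of_ne h.symm,
    update_comm h, mul_sum]
  rw [sum_comm]
  exact sum_congr rfl fun _ _ => sum_congr rfl fun _ _ => by ring

theorem eq_zero_of_slotMatrix_mulVec_eq_zero {μ : ι} {B : Matrix (n μ) (n μ) R}
    (hB : LinearMap.ker (toLin' B) = ⊥) {v : (∀ ν, n ν) → R} (hv : slotMatrix μ B *ᵥ v = 0) :
    v = 0 := by
  funext x
  have hslice : B *ᵥ (fun j => v (update x μ j)) = 0 := funext fun i => by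
    rw [mulVec_apply_eq_sum]
    simpa [slotMatrix_mulVec_apply] using congrFun hv (update x μ i)
  simpa using congrFun (LinearMap.ker_eq_bot'.mp hB _ hslice) (x μ)

theorem slotMatrix_mulVec_prod_eq_zero {μ : ι} {B : Matrix (n μ) (n μ) R}
    (w : ∀ ν, n ν → R) (hw : B *ᵥ w μ = 0) :
    slotMatrix μ B *ᵥ (fun x => ∏ ν, w ν (x ν)) = 0 := by
  funext x
  have hprod : ∀ j, ∏ ν, w ν (update x μ j ν) = w μ j * ∏ ν ∈ univ.erase μ, w ν (x ν) := by
    intro j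
    rw [← mul_prod_erase univ _ (mem_univ μ), update_self]
    congr 1
    exact prod_congr rfl fun ν hν => by rw [update_of_ne (ne_of_mem_erase hν)]
  have hrow : ∑ j, B (x μ) j * w μ j = 0 := congrFun hw (x μ)
  simp only [slotMatrix_mulVec_apply, hprod, ← mul_assoc, ← sum_mul, hrow, zero_mul,
    Pi.zero_apply]

end Slot

section ProductDirac

variable {ι : Type*} [Fintype ι] [DecidableEq ι] {n : ι → Type*} [∀ μ, Fintype (n μ)]
  [∀ μ, DecidableEq (n μ)] {k : Type*} [Fintype k] {R : Type*} [CommRing R]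

def productDirac (A : ∀ μ, Matrix (n μ) (n μ) R) (γ : ι → Matrix k k R) :
    Matrix ((∀ μ, n μ) × k) ((∀ μ, n μ) × k) R :=
  ∑ μ, slotMatrix μ (A μ) ⊗ₖ γ μ

variable [DecidableEq k]

theorem productDirac_mul_self (A : ∀ μ, Matrix (n μ) (n μ) R) {γ : ι → Matrix k k R}
    (hγ : ∀ μ, γ μ * γ μ = 1) (hγanti : ∀ μ ν, μ ≠ ν → γ μ * γ ν + γ ν * γ μ = 0) :
    productDirac A γ * productDirac A γ =
      ∑ μ, (slotMatrix μ (A μ) ⊗ₖ (1 : Matrix k k R)) * (slotMatrix μ (A μ) ⊗ₖ 1) := by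
  have hD : productDirac A γ = ∑ μ, (slotMatrix μ (A μ) ⊗ₖ 1) * (1 ⊗ₖ γ μ) := by
    simp [productDirac, ← mul_kronecker_mul]
  rw [hD]
  refine sum_mul_sum_eq_sum_mul_self_of_anticommute (fun μ ν => ?_) (fun μ ν => ?_)
    (fun μ => ?_) (fun μ ν h => ?_)
  · obtain rfl | h := eq_or_ne μ ν
    · exact Commute.refl _
    · simp only [Commute, SemiconjBy, ← mul_kronecker_mul, (slotMatrix_commute h _ _).eq]
  · simp only [Commute, SemiconjBy, ← mul_kronecker_mul, mul_one, one_mul]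
  · rw [← mul_kronecker_mul, one_mul, hγ, one_kronecker_one]
  · rw [← mul_kronecker_mul, ← mul_kronecker_mul, ← kronecker_add, one_mul, hγanti μ ν h,
      kronecker_zero]

theorem ker_toLin'_productDirac_eq_bot [PartialOrder R] [StarRing R] [StarOrderedRing R]
    [NoZeroDivisors R] {A : ∀ μ, Matrix (n μ) (n μ) R} (hA : ∀ μ, (A μ)ᴴ = -A μ)
    {γ : ι → Matrix k k R} (hγ : ∀ μ, γ μ * γ μ = 1)
    (hγanti : ∀ μ ν, μ ≠ ν → γ μ * γ ν + γ ν * γ μ = 0) {μ : ι}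
    (hμ : LinearMap.ker (toLin' (A μ)) = ⊥) :
    LinearMap.ker (toLin' (productDirac A γ)) = ⊥ := by
  rw [LinearMap.ker_eq_bot']
  intro v hv
  rw [toLin'_apply] at hv
  have hskew : ∀ ν, (slotMatrix ν (A ν) ⊗ₖ (1 : Matrix k k R))ᴴ = -(slotMatrix ν (A ν) ⊗ₖ 1) :=
    fun ν => by
      rw [conjTranspose_kronecker, slotMatrix_conjTranspose, hA, slotMatrix_neg, conjTranspose_one]
      ext; simp
  have hslot := mulVec_eq_zero_of_sum_mul_self_mulVec_eq_zero hskew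
    (by rw [← productDirac_mul_self A hγ hγanti, ← mulVec_mulVec, hv, mulVec_zero]) μ
  funext ⟨x, t⟩
  have hslice : slotMatrix μ (A μ) *ᵥ (fun y => v (y, t)) = 0 := funext fun y => by
    rw [← kronecker_one_mulVec_apply, hslot, Pi.zero_apply, Pi.zero_apply]
  exact congrFun (eq_zero_of_slotMatrix_mulVec_eq_zero hμ hslice) x

theorem card_le_finrank_ker_toLin'_productDirac {K : Type*} [Field K]
    {A : ∀ μ, Matrix (n μ) (n μ) K} (hA : ∀ μ, LinearMap.ker (toLin' (A μ)) ≠ ⊥)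
    (γ : ι → Matrix k k K) :
    Fintype.card k ≤ Module.finrank K (LinearMap.ker (toLin' (productDirac A γ))) := by
  choose w hwker hw0 using fun μ => (Submodule.ne_bot_iff _).mp (hA μ)
  set W : (∀ μ, n μ) → K := fun x => ∏ μ, w μ (x μ)
  have hSW : ∀ μ, slotMatrix μ (A μ) *ᵥ W = 0 := fun μ =>
    slotMatrix_mulVec_prod_eq_zero w (by simpa using hwker μ)
  choose x₀ hx₀ using fun μ => Function.ne_iff.mp (hw0 μ)
  have hW : W x₀ ≠ 0 := prod_ne_zero_iff.mpr fun μ _ => hx₀ μ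
  let L : (k → K) →ₗ[K] ((∀ μ, n μ) × k → K) :=
    { toFun u := fun x => W x.1 * u x.2
      map_add' u u' := by ext; simp [mul_add]
      map_smul' c u := by ext; simp [mul_left_comm] }
  have hL : ∀ u, L u ∈ LinearMap.ker (toLin' (productDirac A γ)) := fun u => by
    change productDirac A γ *ᵥ (fun x => W x.1 * u x.2) = 0
    rw [productDirac, sum_mulVec]
    refine sum_eq_zero fun μ _ => funext fun x => ?_
    rw [kronecker_mulVec_apply, hSW, Pi.zero_apply, zero_mul, Pi.zero_apply]
  have hLinj : Function.Injective (L.codRestrict _ hL) := by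
    refine (injective_iff_map_eq_zero _).mpr fun u hu => funext fun t => ?_
    have := congrFun (congrArg Subtype.val hu) (x₀, t)
    exact (mul_eq_zero.mp this).resolve_left hW
  simpa using LinearMap.finrank_le_finrank_of_injective hLinj

end ProductDirac

theorem val_finRotate {N : ℕ} (j : Fin N) : (finRotate N j : ℕ) = ((j : ℕ) + 1) % N := by
  have := j.neZero
  rw [finRotate_apply, Fin.val_add, Fin.val_one', Nat.add_mod_mod]

theorem cycleAsAdj_eq_sub {N : ℕ} (hN : 3 ≤ N) :
    cycleAsAdj N = (finRotate N).permMatrix ℂ - (finRotate N)⁻¹.permMatrix ℂ := by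
  ext j k
  have hsucc : ∀ a b : Fin N, (b : ℕ) = ((a : ℕ) + 1) % N ↔ finRotate N a = b := fun a b => by
    rw [Fin.ext_iff, val_finRotate, eq_comm]
  have hne : ¬ (finRotate N j = k ∧ finRotate N k = j) := by
    have hmod : ∀ a : Fin N, ((a : ℕ) + 1) % N = if (a : ℕ) + 1 = N then 0 else (a : ℕ) + 1 :=
      fun a => by split_ifs with h <;> simp [h, Nat.mod_eq_of_lt, Nat.lt_of_le_of_ne a.isLt]
    simp only [← hsucc, hmod]
    split_ifs <;> omega
  rw [← transpose_permMatrix]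
  simp only [cycleAsAdj, hsucc, Matrix.sub_apply, transpose_apply, PEquiv.toMatrix_apply,
    Equiv.toPEquiv_apply, Option.mem_def, Option.some.injEq]
  by_cases h1 : finRotate N j = k <;> by_cases h2 : finRotate N k = j <;> simp_all

theorem cycleAsAdj_conjTranspose {N : ℕ} (hN : 3 ≤ N) : (cycleAsAdj N)ᴴ = -cycleAsAdj N := by
  rw [cycleAsAdj_eq_sub hN, conjTranspose_sub, conjTranspose_permMatrix, conjTranspose_permMatrix,
    inv_inv, neg_sub]

theorem cycleAsAdj_mulVec_one {N : ℕ} (hN : 3 ≤ N) : cycleAsAdj N *ᵥ (fun _ => 1) = 0 := by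
  rw [cycleAsAdj_eq_sub hN, sub_mulVec, permMatrix_mulVec, permMatrix_mulVec]
  exact sub_self _

theorem ker_toLin'_cycleAsAdj_ne_bot {N : ℕ} (hN : 3 ≤ N) :
    LinearMap.ker (toLin' (cycleAsAdj N)) ≠ ⊥ :=
  (Submodule.ne_bot_iff _).mpr ⟨fun _ => 1, by simpa using cycleAsAdj_mulVec_one hN,
    fun h => one_ne_zero (congrFun h ⟨0, by omega⟩)⟩

theorem pathAsAdj_conjTranspose (N : ℕ) : (pathAsAdj N)ᴴ = -pathAsAdj N := by
  ext i j
  simp only [conjTranspose_apply, Matrix.neg_apply, pathAsAdj]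
  split_ifs <;> first | (exfalso; omega) | simp

/-- Indices are shifted by one, so that the boundary value at `-1` sits at `0`. -/
def zeroPad {R : Type*} [Zero R] {N : ℕ} (g : Fin N → R) (k : ℕ) : R :=
  if h : 0 < k ∧ k ≤ N then g ⟨k - 1, by omega⟩ else 0

theorem sum_ite_succ_eq_zeroPad {R : Type*} [AddCommMonoid R] {N : ℕ} (g : Fin N → R) (t : ℕ) :
    ∑ j : Fin N, (if (j : ℕ) + 1 = t then g j else 0) = zeroPad g t := by
  unfold zeroPad
  split_ifs with h
  · rw [Fintype.sum_eq_single ⟨t - 1, by omega⟩ fun j hj =>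
      if_neg fun hjt => hj (by ext; simp; omega)]
    simp; omega
  · exact sum_eq_zero fun j _ => if_neg (by omega)

theorem pathAsAdj_mulVec_apply {N : ℕ} (g : Fin N → ℂ) (i : Fin N) :
    (pathAsAdj N *ᵥ g) i = zeroPad g (i + 2) - zeroPad g i := by
  have hentry : ∀ j : Fin N, pathAsAdj N i j * g j =
      (if (j : ℕ) + 1 = i + 2 then g j else 0) - if (j : ℕ) + 1 = i then g j else 0 := fun j => by
    unfold pathAsAdj
    split_ifs <;> first | (exfalso; omega) | ring
  rw [mulVec_apply_eq_sum, sum_congr rfl fun j _ => hentry j, sum_sub_distrib,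
    sum_ite_succ_eq_zeroPad, sum_ite_succ_eq_zeroPad]

theorem ker_toLin'_pathAsAdj_eq_bot {N : ℕ} (hN : Even N) :
    LinearMap.ker (toLin' (pathAsAdj N)) = ⊥ := by
  rw [LinearMap.ker_eq_bot']
  intro g hg
  rw [toLin'_apply] at hg
  have hstep : ∀ i < N, zeroPad g (i + 2) = zeroPad g i := fun i hi => by
    rw [← sub_eq_zero, ← pathAsAdj_mulVec_apply g ⟨i, hi⟩, hg, Pi.zero_apply]
  have hperiodic : ∀ k ≤ N + 1, zeroPad g k = zeroPad g (k % 2) := by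
    refine Nat.twoStepInduction (by simp) (by simp) fun i ih _ hi => ?_
    rw [hstep i (by omega), ih (by omega), Nat.add_mod_right]
  have h0 : zeroPad g 0 = 0 := by simp [zeroPad]
  have h1 : zeroPad g 1 = 0 := by
    rw [← Nat.odd_iff.mp hN.add_one, ← hperiodic (N + 1) le_rfl]
    simp [zeroPad]
  funext j
  have hj : zeroPad g (j + 1) = g j := by simp [zeroPad]
  rw [Pi.zero_apply, ← hj, hperiodic _ (by omega)]
  rcases Nat.mod_two_eq_zero_or_one (j + 1) with h | h <;> rw [h] <;> assumption

theorem pathAsAdj_mulVec_indicator_even {N : ℕ} (hN : Odd N) :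
    pathAsAdj N *ᵥ (fun j => if Even (j : ℕ) then 1 else 0) = 0 := by
  funext i
  rw [pathAsAdj_mulVec_apply, Pi.zero_apply, sub_eq_zero]
  have := i.isLt
  obtain ⟨m, rfl⟩ := hN
  simp only [zeroPad, Nat.even_iff]
  split_ifs <;> first | rfl | (exfalso; omega)

theorem ker_toLin'_pathAsAdj_ne_bot {N : ℕ} (hN : Odd N) :
    LinearMap.ker (toLin' (pathAsAdj N)) ≠ ⊥ :=
  (Submodule.ne_bot_iff _).mpr ⟨_, by simpa using pathAsAdj_mulVec_indicator_even hN,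
    fun h => by simpa using congrFun h ⟨0, hN.pos⟩⟩

open Matrix in
theorem dirac_ker_product_graph_min_general
    (D : ℕ) (N : Fin D → ℕ) (cyc : Fin D → Bool)
    (hcyc : ∀ μ, cyc μ = true → 3 ≤ N μ)
    (r : ℕ)
    (γ : Fin D → Matrix (Fin r) (Fin r) ℂ)
    (hγ : ∀ μ ν, γ μ * γ ν + γ ν * γ μ =
      if μ = ν then (2 : ℂ) • (1 : Matrix (Fin r) (Fin r) ℂ) else 0) :
    let A : ∀ μ, Matrix (Fin (N μ)) (Fin (N μ)) ℂ :=
      fun μ => if cyc μ then cycleAsAdj (N μ) else pathAsAdj (N μ)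
    let Dop : Matrix ((∀ μ, Fin (N μ)) × Fin r) ((∀ μ, Fin (N μ)) × Fin r) ℂ :=
      Matrix.of fun p q => ∑ μ, (A μ (p.1 μ) (q.1 μ)) * (γ μ p.2 q.2) *
        ∏ ν ∈ Finset.univ.erase μ, (if p.1 ν = q.1 ν then (1 : ℂ) else 0)
    ((∃ μ, cyc μ = false ∧ Even (N μ)) →
        LinearMap.ker (Matrix.toLin' Dop) = ⊥) ∧
    ((∀ μ, cyc μ = false → Odd (N μ)) →
        r ≤ Module.finrank ℂ (LinearMap.ker (Matrix.toLin' Dop))) := by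
  intro A Dop
  have hDop : Dop = productDirac A γ := by
    ext p q
    simp only [Dop, productDirac, slotMatrix, of_apply, Matrix.sum_apply, kroneckerMap_apply]
    exact sum_congr rfl fun μ _ => mul_right_comm _ _ _
  have hsq : ∀ μ, γ μ * γ μ = 1 := fun μ =>
    smul_right_injective _ (two_ne_zero (α := ℂ)) (by simpa [two_smul] using hγ μ μ)
  have hanti : ∀ μ ν, μ ≠ ν → γ μ * γ ν + γ ν * γ μ = 0 := fun μ ν h => by
    simpa [h] using hγ μ ν
  have hskew : ∀ μ, (A μ)ᴴ = -A μ := fun μ => by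
    cases h : cyc μ
    · simp [A, h, pathAsAdj_conjTranspose]
    · simp [A, h, cycleAsAdj_conjTranspose (hcyc μ h)]
  rw [hDop]
  refine ⟨fun ⟨μ, hμ, heven⟩ => ker_toLin'_productDirac_eq_bot hskew hsq hanti (μ := μ) ?_,
    fun hodd => ?_⟩
  · simpa [A, hμ] using ker_toLin'_pathAsAdj_eq_bot heven
  · refine (Fintype.card_fin r).symm.trans_le
      (card_le_finrank_ker_toLin'_productDirac (fun μ => ?_) γ)
    cases h : cyc μ
    · simpa [A, h] using ker_toLin'_pathAsAdj_ne_bot (hodd μ h)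
    · simpa [A, h] using ker_toLin'_cycleAsAdj_ne_bot (hcyc μ h)

open Matrix in
theorem dirac_ker_product_graph_min
    (D : ℕ) (N : Fin D → ℕ) (cyc : Fin D → Bool)
    (hcyc : ∀ μ, cyc μ = true → 3 ≤ N μ)
    (hpath : ∀ μ, cyc μ = false → 2 ≤ N μ)
    (r : ℕ) (hr : 1 ≤ r)
    (γ : Fin D → Matrix (Fin r) (Fin r) ℂ)
    (hγ : ∀ μ ν, γ μ * γ ν + γ ν * γ μ =
      if μ = ν then (2 : ℂ) • (1 : Matrix (Fin r) (Fin r) ℂ) else 0) :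
    let A : ∀ μ, Matrix (Fin (N μ)) (Fin (N μ)) ℂ :=
      fun μ => if cyc μ then cycleAsAdj (N μ) else pathAsAdj (N μ)
    let Dop : Matrix ((∀ μ, Fin (N μ)) × Fin r) ((∀ μ, Fin (N μ)) × Fin r) ℂ :=
      Matrix.of fun p q => ∑ μ, (A μ (p.1 μ) (q.1 μ)) * (γ μ p.2 q.2) *
        ∏ ν ∈ Finset.univ.erase μ, (if p.1 ν = q.1 ν then (1 : ℂ) else 0)
    ((∃ μ, cyc μ = false ∧ Even (N μ)) →
        LinearMap.ker (Matrix.toLin' Dop) = ⊥) ∧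
    ((∀ μ, cyc μ = false → Odd (N μ)) →
        r ≤ Module.finrank ℂ (LinearMap.ker (Matrix.toLin' Dop))) :=
  dirac_ker_product_graph_min_general D N cyc hcyc r γ hγ
end

section
/- The rank of the anti-symmetrized adjacency matrix of the cycle digraph on N vertices equals N - 1 if N is odd and N - 2 if N is even. -/
/-!
Viewing the vertices as `ℤ/N`, the matrix acts by `(A x) j = x (j + 1) - x (j - 1)`, so its
kernel consists of the `2`-periodic vectors, i.e. the functions on `(ℤ/N) ⧸ ⟨2⟩`. That quotient
has `gcd N 2` elements, hence `rank A = N - gcd N 2` by rank–nullity.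
-/

open Function Module LinearMap Fin.CommRing

section PeriodicFunctions

variable (K : Type*) [Field K] {G : Type*} [AddGroup G] (H : AddSubgroup G)

theorem mem_range_funLeft_mk_iff {f : G → K} :
    f ∈ range (funLeft K K (QuotientAddGroup.mk : G → G ⧸ H)) ↔ ∀ h ∈ H, Periodic f h := by
  constructor
  · rintro ⟨g, rfl⟩ h hh x
    simp [funLeft_apply, hh]
  · intro hf
    refine ⟨fun q => Quotient.liftOn' q f fun a b hab => ?_, rfl⟩
    rw [QuotientAddGroup.leftRel_apply] at hab
    simpa using (hf _ hab a).symm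

theorem finrank_range_funLeft_mk [Finite G] :
    finrank K (range (funLeft K K (QuotientAddGroup.mk : G → G ⧸ H))) = H.index := by
  have : Fintype (G ⧸ H) := Fintype.ofFinite _
  rw [finrank_range_of_inj (funLeft_injective_of_surjective _ _ _ QuotientAddGroup.mk_surjective),
    finrank_fintype_fun_eq_card, Fintype.card_eq_nat_card, AddSubgroup.index]

end PeriodicFunctions

theorem Function.periodic_zmultiples_iff {G X : Type*} [AddGroup G] {f : G → X} {c : G} :
    (∀ h ∈ AddSubgroup.zmultiples c, Periodic f h) ↔ Periodic f c := by
  refine ⟨fun hf => hf c (AddSubgroup.mem_zmultiples c), fun hf h hh => ?_⟩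
  obtain ⟨n, rfl⟩ := AddSubgroup.mem_zmultiples_iff.mp hh
  exact hf.zsmul n

theorem Fin.addOrderOf_natCast (N k : ℕ) [NeZero N] : addOrderOf (k : Fin N) = N / N.gcd k := by
  rcases Nat.eq_zero_or_pos k with rfl | hk
  · simp [Nat.div_self (Nat.pos_of_neZero N)]
  · rw [← nsmul_one, addOrderOf_nsmul' _ hk.ne',
      CharP.eq (Fin N) (CharP.addOrderOf_one _) inferInstance]

theorem Fin.index_zmultiples_natCast (N k : ℕ) [NeZero N] :
    (AddSubgroup.zmultiples (k : Fin N)).index = N.gcd k := by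
  have hcard := (AddSubgroup.zmultiples (k : Fin N)).index_mul_card
  rw [Nat.card_zmultiples, Fin.addOrderOf_natCast, Nat.card_eq_fintype_card,
    Fintype.card_fin] at hcard
  have hpos : 0 < N / N.gcd k :=
    Nat.div_pos (Nat.gcd_le_left _ N.pos_of_neZero) (Nat.gcd_pos_of_pos_left _ N.pos_of_neZero)
  refine Nat.eq_of_mul_eq_mul_right hpos ?_
  rw [hcard, Nat.mul_div_cancel' (Nat.gcd_dvd_left N k)]

section CycleMatrix

open Matrix

variable {N : ℕ}

theorem cycleAsAdj_apply [NeZero N] (hN : 3 ≤ N) (j k : Fin N) :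
    cycleAsAdj N j k = (if k = j + 1 then 1 else 0) - (if k = j - 1 then 1 else 0) := by
  have hsucc (a b : Fin N) : (b : ℕ) = ((a : ℕ) + 1) % N ↔ b = a + 1 := by
    rw [Fin.ext_iff, Fin.val_add, Fin.val_one', Nat.one_mod_eq_one.mpr (by omega)]
  have hpred : j = k + 1 ↔ k = j - 1 := by rw [eq_sub_iff_add_eq, eq_comm]
  have htwo : j + 1 ≠ j - 1 := by
    rw [Ne, ← sub_eq_zero, add_sub_sub_cancel, one_add_one_eq_two, ← Nat.cast_ofNat,
      Fin.natCast_eq_zero]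
    exact Nat.not_dvd_of_pos_of_lt two_pos (by omega)
  simp only [cycleAsAdj, hsucc, hpred]
  split_ifs <;> simp_all

theorem cycleAsAdj_mulVec_apply [NeZero N] (hN : 3 ≤ N) (x : Fin N → ℂ) (j : Fin N) :
    (cycleAsAdj N *ᵥ x) j = x (j + 1) - x (j - 1) := by
  simp only [Matrix.mulVec, dotProduct, cycleAsAdj_apply hN, sub_mul, ite_mul, one_mul, zero_mul,
    Finset.sum_sub_distrib, Finset.sum_ite_eq', Finset.mem_univ, if_true]

theorem mem_ker_cycleAsAdj_iff [NeZero N] (hN : 3 ≤ N) (x : Fin N → ℂ) :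
    x ∈ ker (cycleAsAdj N).mulVecLin ↔ Periodic x 2 := by
  rw [mem_ker, Matrix.mulVecLin_apply, funext_iff]
  simp only [cycleAsAdj_mulVec_apply hN, Pi.zero_apply, sub_eq_zero]
  refine ⟨fun hx j => by simpa [add_assoc, one_add_one_eq_two] using (hx (j + 1)), fun hx j => ?_⟩
  simpa [sub_add_eq_add_sub, ← one_add_one_eq_two, ← add_assoc] using (hx (j - 1))

theorem ker_cycleAsAdj [NeZero N] (hN : 3 ≤ N) :
    ker (cycleAsAdj N).mulVecLin =
      range (funLeft ℂ ℂ (QuotientAddGroup.mk : Fin N → Fin N ⧸ AddSubgroup.zmultiples 2)) := by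
  ext x
  rw [mem_ker_cycleAsAdj_iff hN, mem_range_funLeft_mk_iff, periodic_zmultiples_iff]

theorem cycleAsAdj_rank_eq_sub_gcd (hN : 3 ≤ N) : (cycleAsAdj N).rank = N - N.gcd 2 := by
  have : NeZero N := ⟨by omega⟩
  have hrank := (cycleAsAdj N).mulVecLin.finrank_range_add_finrank_ker
  rw [ker_cycleAsAdj hN, finrank_range_funLeft_mk, ← Nat.cast_ofNat, Fin.index_zmultiples_natCast,
    finrank_fintype_fun_eq_card, Fintype.card_fin] at hrank
  rw [Matrix.rank]
  omega

end CycleMatrix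

theorem cycle_asAdj_rank (N : ℕ) (hN : 3 ≤ N) :
    (Odd N → (cycleAsAdj N).rank = N - 1) ∧
    (Even N → (cycleAsAdj N).rank = N - 2) := by
  rw [cycleAsAdj_rank_eq_sub_gcd hN]
  exact ⟨fun hodd => by rw [hodd.coprime_two_right.gcd_eq_one],
    fun heven => by rw [Nat.gcd_eq_right heven.two_dvd]⟩
end
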